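/- Let 𝓗 be a connected hypergraph on H, and let S and T be distinct constructions of 𝓗 joined by an edge whose non-singleton node is {x,y}, with the node {x} the parent of the node {y} in S; set K = supp(S↾x). Then v^S_w = v^T_w for every w ∈ H with w ∉ {x,y}, and v^S_x − v^T_x = λ = v^T_y − v^S_y, where λ = |{e ∈ Sat(𝓗) : {x,y} ⊆ e ⊆ K}|; moreover λ ≥ 1. -/

import Mathlib

open scoped Classical

noncomputable section

/-! ## Hypergraphs (nestohedra combinatorics), after Curien–Laplante-Anfossi:
hypergraphs, restrictions, connectivity, saturation, reconnected restriction,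
constructs/constructions, the face order, the flip rewriting, and terms over the
associated signatures. -/

/-- A hypergraph on a finite vertex set: a finite set of nonempty hyperedges whose union is
the vertex set, assumed atomic (every singleton is a hyperedge). -/
structure AtomicHypergraph (α : Type*) [DecidableEq α] where
  verts : Finset α
  edges : Finset (Finset α)
  edges_nonempty : ∀ e ∈ edges, e.Nonempty
  edges_subset : ∀ e ∈ edges, e ⊆ verts
  atomic : ∀ v ∈ verts, {v} ∈ edges

namespace AtomicHypergraph

variable {α : Type*} [DecidableEq α]

/-- The plain restriction `𝓗_X` of a hypergraph to a subset `X` of its vertices. -/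
def restrict (H : AtomicHypergraph α) (X : Finset α) : AtomicHypergraph α where
  verts := X ∩ H.verts
  edges := H.edges.filter (· ⊆ X)
  edges_nonempty e he := H.edges_nonempty e (Finset.mem_filter.mp he).1
  edges_subset e he :=
    Finset.subset_inter (Finset.mem_filter.mp he).2 (H.edges_subset e (Finset.mem_filter.mp he).1)
  atomic v hv := by
    rcases Finset.mem_inter.mp hv with ⟨h1, h2⟩
    exact Finset.mem_filter.mpr ⟨H.atomic v h2, Finset.singleton_subset_iff.mpr h1⟩

/-- A hypergraph is connected if its vertex set is nonempty and admits no nontrivial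
partition `X₁ ∪ X₂` such that every edge lies in `X₁` or in `X₂`. -/
def Connected (H : AtomicHypergraph α) : Prop :=
  H.verts.Nonempty ∧ ∀ X₁ X₂ : Finset α, X₁.Nonempty → X₂.Nonempty →
    Disjoint X₁ X₂ → X₁ ∪ X₂ = H.verts → ∃ e ∈ H.edges, ¬e ⊆ X₁ ∧ ¬e ⊆ X₂

/-- `C` is (the vertex set of) a connected component of `H`: a maximal connected subset. -/
def IsComponent (H : AtomicHypergraph α) (C : Finset α) : Prop :=
  C ⊆ H.verts ∧ (H.restrict C).Connected ∧
    ∀ D : Finset α, C ⊆ D → D ⊆ H.verts → (H.restrict D).Connected → D = C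

/-- `y` and `z` lie in the same connected component of `H`. -/
def SameComponent (H : AtomicHypergraph α) (y z : α) : Prop :=
  ∃ C : Finset α, H.IsComponent C ∧ y ∈ C ∧ z ∈ C

/-- The saturation `Sat(𝓗)`: the set of (nonempty) connected subsets of vertices. -/
def sat (H : AtomicHypergraph α) : Finset (Finset α) :=
  H.verts.powerset.filter fun X => (H.restrict X).Connected

theorem singleton_connected (H : AtomicHypergraph α) {v : α} (hv : v ∈ H.verts) :
    (H.restrict {v}).Connected := by
  constructor
  · exact ⟨v, Finset.mem_inter.mpr ⟨Finset.mem_singleton_self v, hv⟩⟩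
  · intro X₁ X₂ h₁ h₂ hd hu
    exfalso
    have hv' : ({v} : Finset α) ∩ H.verts = {v} :=
      Finset.inter_eq_left.mpr (Finset.singleton_subset_iff.mpr hv)
    have hu' : X₁ ∪ X₂ = ({v} : Finset α) := hu.trans hv'
    have hX₁ : X₁ ⊆ {v} := hu' ▸ Finset.subset_union_left
    have hX₂ : X₂ ⊆ {v} := hu' ▸ Finset.subset_union_right
    obtain ⟨a, ha⟩ := h₁
    obtain ⟨b, hb⟩ := h₂
    have ha' := Finset.mem_singleton.mp (hX₁ ha)
    have hb' := Finset.mem_singleton.mp (hX₂ hb)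
    subst ha'; exact Finset.disjoint_left.mp hd ha (hb' ▸ hb)

/-- The reconnected restriction `𝓗 ↾ X` of `𝓗` to `X`. -/
def reconRestrict (H : AtomicHypergraph α) (X : Finset α) : AtomicHypergraph α where
  verts := X ∩ H.verts
  edges := (H.sat.image (· ∩ X)).filter (·.Nonempty)
  edges_nonempty e he := (Finset.mem_filter.mp he).2
  edges_subset := by
    intro e he
    rcases Finset.mem_image.mp (Finset.mem_filter.mp he).1 with ⟨Z, hZ, rfl⟩
    have hZv : Z ⊆ H.verts := Finset.mem_powerset.mp (Finset.mem_filter.mp hZ).1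
    exact fun a ha => Finset.mem_inter.mpr
      ⟨(Finset.mem_inter.mp ha).2, hZv (Finset.mem_inter.mp ha).1⟩
  atomic := by
    intro v hv
    rcases Finset.mem_inter.mp hv with ⟨h1, h2⟩
    refine Finset.mem_filter.mpr ⟨Finset.mem_image.mpr ⟨{v}, ?_, ?_⟩, ?_⟩
    · exact Finset.mem_filter.mpr
        ⟨Finset.mem_powerset.mpr (Finset.singleton_subset_iff.mpr h2),
         H.singleton_connected h2⟩
    · exact Finset.inter_eq_left.mpr (Finset.singleton_subset_iff.mpr h1)
    · exact ⟨v, by simp [Finset.inter_eq_left.mpr (Finset.singleton_subset_iff.mpr h1)]⟩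

/-- `x ⇝ {y,z}` in `𝓗`: after removing `x`, the vertices `y` and `z` lie in the same
connected component.  Its negation is "`x` disconnects `y` and `z` in `𝓗`". -/
def Links (H : AtomicHypergraph α) (x y z : α) : Prop :=
  (H.restrict (H.verts \ {x})).SameComponent y z

/-- A hypergraph is contextual if for every connected subset `Y` of cardinality at least 3
and all distinct `x, y, z ∈ Y`, `x` disconnects `y` and `z` in `𝓗_Y` iff it does in `𝓗`. -/
def Contextual (H : AtomicHypergraph α) : Prop :=
  ∀ Y : Finset α, Y ⊆ H.verts → (H.restrict Y).Connected → 3 ≤ Y.card →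
    ∀ x y z : α, x ∈ Y → y ∈ Y → z ∈ Y → x ≠ y → y ≠ z → x ≠ z →
      ((H.restrict Y).Links x y z ↔ H.Links x y z)

end AtomicHypergraph

/-- Finite rooted trees with nodes decorated by finite sets (potential constructs). -/
inductive FTree (α : Type*) : Type _ where
  | node : Finset α → List (FTree α) → FTree α

namespace FTree

variable {α : Type*} [DecidableEq α]

/-- The decoration of the root node. -/
def label : FTree α → Finset α
  | node Y _ => Y

/-- The list of children of the root node. -/
def children : FTree α → List (FTree α)
  | node _ ts => ts

/-- The support of a tree: the union of the decorations of its nodes. -/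
def support : FTree α → Finset α
  | node Y [] => Y
  | node Y (t :: ts) => support t ∪ support (node Y ts)

/-- The list of decorations of the nodes of a tree. -/
def labels : FTree α → List (Finset α)
  | node Y [] => [Y]
  | node Y (t :: ts) => labels t ++ labels (node Y ts)

/-- The dimension of a construct: the sum over its nodes `X` of `|X| - 1`. -/
def dim (T : FTree α) : ℕ := (T.labels.map fun X => X.card - 1).sum

mutual
  /-- The (full) subtree rooted at the node decorated by `X`, if any. -/
  def subtreeAt : FTree α → Finset α → Option (FTree α)
    | node Y ts, X => if Y = X then some (node Y ts) else subtreeAtList ts X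
  def subtreeAtList : List (FTree α) → Finset α → Option (FTree α)
    | [], _ => none
    | t :: ts, X => (subtreeAt t X).elim (subtreeAtList ts X) some
end

/-- The support `supp (T ↾ X)` of the subtree rooted at the node decorated by `X`
(or `∅` if there is no such node). -/
def suppAt (T : FTree α) (X : Finset α) : Finset α :=
  ((T.subtreeAt X).map support).getD ∅

mutual
  /-- The list of supports of the subtrees rooted at the nodes of `T` (its nested set). -/
  def nests : FTree α → List (Finset α)
    | node Y ts => support (node Y ts) :: nestsList ts
  def nestsList : List (FTree α) → List (Finset α)
    | [] => []
    | t :: ts => nests t ++ nestsList ts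
end

/-- The nested set of a tree, as a finite set. -/
def nestSet (T : FTree α) : Finset (Finset α) := T.nests.toFinset

/-- `S ≺ T` (`S` is covered by `T`) in the face order: `T` is obtained from `S` by
contracting one edge between a node and its father (equivalently, the nested set of `T`
is obtained from that of `S` by removing one non-root element). -/
def CoveredBy (S T : FTree α) : Prop :=
  ∃ N ∈ S.nests, N ≠ S.support ∧ T.nestSet = S.nestSet.erase N

/-- The face (subface) order `S ≼ T` on constructs: the reflexive–transitive closure of
the covering relation `≺`. -/
def FaceLe (S T : FTree α) : Prop := Relation.ReflTransGen CoveredBy S T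

/-- `IsSubtree S T`: `S` is a (full) subtree of `T`. -/
inductive IsSubtree : FTree α → FTree α → Prop
  | refl (t : FTree α) : IsSubtree t t
  | child {s t u : FTree α} : IsSubtree s t → t ∈ u.children → IsSubtree s u

/-- In `T`, the node decorated by `X` has a child decorated by `Y`. -/
def ParentChild (X Y : Finset α) (T : FTree α) : Prop :=
  ∃ R : FTree α, IsSubtree R T ∧ R.label = X ∧ ∃ t ∈ R.children, t.label = Y

mutual
  /-- Pruning: remove all (subtrees rooted at) nodes whose decoration is not a subset
  of `X`, keeping the root. -/
  def prune (X : Finset α) : FTree α → FTree α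
    | node Y ts => node Y (pruneList X ts)
  def pruneList (X : Finset α) : List (FTree α) → List (FTree α)
    | [] => []
    | t :: ts => if t.label ⊆ X then prune X t :: pruneList X ts else pruneList X ts
end

end FTree

/-- `IsConstruct H T`: the tree `T` is a construct of the hypergraph `H`: its root `Y` is a
nonempty subset of the vertices, its children are constructs of the connected components of
`𝓗 ∖ Y` (one for each component, listed by increasing maximal vertex). -/
inductive IsConstruct {α : Type*} [LinearOrder α] : AtomicHypergraph α → FTree α → Prop
  | node {H : AtomicHypergraph α} (Y : Finset α) (ts : List (FTree α))
      (hY : Y.Nonempty) (hYsub : Y ⊆ H.verts)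
      (hmem : ∀ t ∈ ts, (H.restrict (H.verts \ Y)).IsComponent t.support)
      (hcover : ∀ C : Finset α, (H.restrict (H.verts \ Y)).IsComponent C →
        ∃ t ∈ ts, t.support = C)
      (hsorted : ts.Pairwise fun a b => a.support.max < b.support.max)
      (hchild : ∀ t ∈ ts, IsConstruct (H.restrict t.support) t) :
      IsConstruct H (FTree.node Y ts)

section ConstructionOrder

variable {α : Type*} [LinearOrder α]

/-- A construction: a construct all of whose nodes are singletons (a vertex of the
nestohedron). -/
def IsConstruction (H : AtomicHypergraph α) (T : FTree α) : Prop :=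
  IsConstruct H T ∧ ∀ X ∈ T.labels, X.card = 1

/-- An `X`-face: a 2-dimensional construct whose unique non-singleton node is decorated
by `X`, of cardinality 3. -/
def IsXFace (H : AtomicHypergraph α) (X : Finset α) (T : FTree α) : Prop :=
  IsConstruct H T ∧ X.card = 3 ∧ X ∈ T.labels ∧ ∀ Y ∈ T.labels, Y ≠ X → Y.card = 1

/-- Two distinct constructions are joined by an edge of the nestohedron: both are covered
by a common 1-dimensional construct. -/
def EdgeJoined (H : AtomicHypergraph α) (S T : FTree α) : Prop :=
  IsConstruction H S ∧ IsConstruction H T ∧ S ≠ T ∧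
  ∃ V : FTree α, IsConstruct H V ∧ V.dim = 1 ∧ FTree.CoveredBy S V ∧ FTree.CoveredBy T V

/-- The flip rewriting relation `S → T` on constructions of an ordered hypergraph:
`S` and `T` are the two endpoints of an edge whose 1-dimensional face has unique
non-singleton node `{x, y}` with `x < y`, and in `S` the node `{x}` is the parent of the
node `{y}`. -/
def Flip (H : AtomicHypergraph α) (S T : FTree α) : Prop :=
  IsConstruction H S ∧ IsConstruction H T ∧ S ≠ T ∧
  ∃ (V : FTree α) (x y : α), IsConstruct H V ∧ V.dim = 1 ∧ x ≠ y ∧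
    ({x, y} : Finset α) ∈ V.labels ∧ FTree.CoveredBy S V ∧ FTree.CoveredBy T V ∧
    FTree.ParentChild ({x} : Finset α) ({y} : Finset α) S ∧ x < y

/-- The coordinate vector of a construction `S` of `H`:
`v^S_x = |{e ∈ Sat(𝓗) : x ∈ e ⊆ supp (S ↾ x)}|`. -/
def coordVec (H : AtomicHypergraph α) (S : FTree α) (x : α) : ℕ :=
  (H.sat.filter fun e => x ∈ e ∧ e ⊆ S.suppAt {x}).card

end ConstructionOrder

/-- Raw terms over the signature `Σ_𝓗` (and `Σ^c_𝓗`): variables are (connected) subsets,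
function symbols are pairs `(X, Y)` of subsets, applied to a list of arguments. -/
inductive HTerm (α : Type*) : Type _ where
  | var : Finset α → HTerm α
  | app : Finset α → Finset α → List (HTerm α) → HTerm α

namespace HTerm

variable {α : Type*} [DecidableEq α]

/-- The (output) sort of a term. -/
def sortOf : HTerm α → Finset α
  | var A => A
  | app _ Y _ => Y

/-- The list of variables occurring in a term. -/
def varsList : HTerm α → List (Finset α)
  | var A => [A]
  | app _ _ [] => []
  | app X Y (t :: ts) => varsList t ++ varsList (app X Y ts)

/-- The list of first components of the function symbols occurring in a term. -/
def appFirsts : HTerm α → List (Finset α)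
  | var _ => []
  | app X _ [] => [X]
  | app X Y (t :: ts) => appFirsts t ++ appFirsts (app X Y ts)

/-- A term is closed if it contains no variables. -/
def Closed (t : HTerm α) : Prop := t.varsList = []

/-- The union `⋃ var(t)` of the variables of a term. -/
def varsUnion (t : HTerm α) : Finset α := t.varsList.foldr (· ∪ ·) ∅

mutual
  /-- Projection of a term to a decorated tree: every function symbol `(X, Y)` is sent to
  its first component `X`, and all variables are pruned. -/
  def toTree : HTerm α → FTree α
    | .var A => .node A []
    | .app X _ ts => .node X (toTreeList ts)
  def toTreeList : List (HTerm α) → List (FTree α)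
    | [] => []
    | .var _ :: ts => toTreeList ts
    | t :: ts => toTree t :: toTreeList ts
end

end HTerm

/-- Well-formed terms over the signature `Σ_𝓗` associated with the hypergraph `H`:
a variable is a connected subset (its own sort); a function symbol `(X, Y)` (with
`∅ ≠ X ⊆ Y ⊆ H` and `Y` connected) is applied to arguments whose sorts are exactly the
connected components of `𝓗_Y ∖ X`, listed by increasing maximal vertex. -/
inductive IsTerm {α : Type*} [LinearOrder α] (H : AtomicHypergraph α) : HTerm α → Prop
  | var (A : Finset α) : A ⊆ H.verts → (H.restrict A).Connected → IsTerm H (.var A)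
  | app (X Y : Finset α) (ts : List (HTerm α)) :
      X.Nonempty → X ⊆ Y → Y ⊆ H.verts → (H.restrict Y).Connected →
      (∀ t ∈ ts, (H.restrict (Y \ X)).IsComponent t.sortOf) →
      (∀ C : Finset α, (H.restrict (Y \ X)).IsComponent C → ∃ t ∈ ts, t.sortOf = C) →
      ts.Pairwise (fun a b => a.sortOf.max < b.sortOf.max) →
      (∀ t ∈ ts, IsTerm H t) →
      IsTerm H (.app X Y ts)

/-!
A construct is determined by its nested set, and the decoration of the node with support `M`
is the part of `M` covered by no smaller nest. A construction `W` covered by the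
1-dimensional construct `V` has one extra nest `N = supp(W↾n)`; if `{p}` is the parent of `{n}`,
the cell of `supp(W↾p)` grows to `{p, n}` when `N` is removed, so `{p, n} = {x, y}`,
`supp(W↾p) = K`, and `N` is the component of `K ∖ {p}` containing `n`; every other vertex keeps
its nest. Hence `S` has `x` above `y` and `T` has `y` above `x` (the same orientation would give
`S` and `T` the same nested set). A connected `e` with `n ∈ e ⊆ K` lies in `N` exactly when
`p ∉ e`, which gives both differences `λ`, and `λ ≥ 1` because `K` itself is connected.
-/

open AtomicHypergraph FTree

theorem List.eq_of_map_eq_of_injOn {α β : Type*} {f : α → β} {l₁ l₂ : List α}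
    (h : l₁.map f = l₂.map f) (hinj : ∀ a ∈ l₁, ∀ b ∈ l₂, f a = f b → a = b) : l₁ = l₂ := by
  induction l₁ generalizing l₂ with
  | nil => exact (List.map_eq_nil_iff.mp h.symm).symm
  | cons a l₁ ih =>
    obtain ⟨b, l₂, rfl, hab, hl⟩ := List.map_eq_cons_iff.mp h.symm
    rw [hinj a List.mem_cons_self b List.mem_cons_self hab.symm,
      ih hl.symm fun a ha b hb => hinj a (List.mem_cons_of_mem _ ha) b (List.mem_cons_of_mem _ hb)]

theorem Finset.pair_eq_pair_iff {α : Type*} [DecidableEq α] {a b c d : α} :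
    ({a, b} : Finset α) = {c, d} ↔ a = c ∧ b = d ∨ a = d ∧ b = c := by
  rw [← Finset.coe_inj]
  push_cast
  exact Set.pair_eq_pair_iff

theorem Finset.eq_singleton_of_card_eq_one {β : Type*} {s : Finset β} {a : β} (h : s.card = 1)
    (ha : a ∈ s) : s = {a} := by
  obtain ⟨b, rfl⟩ := Finset.card_eq_one.mp h
  rw [Finset.mem_singleton.mp ha]

namespace AtomicHypergraph

variable {α : Type*} [DecidableEq α] {G : AtomicHypergraph α}

theorem ext {G' : AtomicHypergraph α} (hv : G.verts = G'.verts) (he : G.edges = G'.edges) :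
    G = G' := by
  cases G; cases G'; simp_all

theorem restrict_verts_of_subset {A : Finset α} (hA : A ⊆ G.verts) : (G.restrict A).verts = A :=
  Finset.inter_eq_left.mpr hA

theorem restrict_restrict {A B : Finset α} (h : B ⊆ A) :
    (G.restrict A).restrict B = G.restrict B := by
  refine ext ?_ ?_
  · simp only [restrict, ← Finset.inter_assoc, Finset.inter_eq_left.mpr h]
  · simp only [restrict, Finset.filter_filter]
    exact Finset.filter_congr fun e _ => ⟨And.right, fun he => ⟨he.trans h, he⟩⟩

theorem restrict_self : G.restrict G.verts = G :=
  ext (Finset.inter_self _) (Finset.filter_true_of_mem G.edges_subset)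

theorem mem_sat {e : Finset α} : e ∈ G.sat ↔ e ⊆ G.verts ∧ (G.restrict e).Connected := by
  simp [sat]

theorem Connected.exists_edge_not_subset {C X₁ X₂ : Finset α} (hC : (G.restrict C).Connected)
    (hCG : C ⊆ G.verts) (hCX : C ⊆ X₁ ∪ X₂) (hX : Disjoint X₁ X₂)
    (h₁ : (C ∩ X₁).Nonempty) (h₂ : (C ∩ X₂).Nonempty) :
    ∃ e ∈ G.edges, e ⊆ C ∧ ¬e ⊆ X₁ ∧ ¬e ⊆ X₂ := by
  have hcover : C ∩ X₁ ∪ C ∩ X₂ = (G.restrict C).verts := by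
    rw [restrict_verts_of_subset hCG, ← Finset.inter_union_distrib_left,
      Finset.inter_eq_left.mpr hCX]
  obtain ⟨e, he, he₁, he₂⟩ :=
    hC.2 _ _ h₁ h₂ (hX.mono Finset.inter_subset_right Finset.inter_subset_right) hcover
  obtain ⟨heG, heC⟩ := Finset.mem_filter.mp he
  exact ⟨e, heG, heC, fun h => he₁ (Finset.subset_inter heC h),
    fun h => he₂ (Finset.subset_inter heC h)⟩

theorem connected_union {A B : Finset α} (hA : A ⊆ G.verts) (hB : B ⊆ G.verts)
    (hAc : (G.restrict A).Connected) (hBc : (G.restrict B).Connected) (hAB : (A ∩ B).Nonempty) :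
    (G.restrict (A ∪ B)).Connected := by
  obtain ⟨v, hv⟩ := hAB
  obtain ⟨hvA, hvB⟩ := Finset.mem_inter.mp hv
  have hU : A ∪ B ⊆ G.verts := Finset.union_subset hA hB
  refine ⟨⟨v, by simp [restrict_verts_of_subset hU, hvA]⟩, fun X₁ X₂ h₁ h₂ hX hcover => ?_⟩
  rw [restrict_verts_of_subset hU] at hcover
  have crossing : ∀ C ⊆ A ∪ B, C ⊆ G.verts → (G.restrict C).Connected →
      (C ∩ X₁).Nonempty → (C ∩ X₂).Nonempty →
      ∃ e ∈ (G.restrict (A ∪ B)).edges, ¬e ⊆ X₁ ∧ ¬e ⊆ X₂ := by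
    intro C hCAB hCG hC hC₁ hC₂
    obtain ⟨e, he, heC, he₁, he₂⟩ :=
      hC.exists_edge_not_subset hCG (hcover ▸ hCAB) hX hC₁ hC₂
    exact ⟨e, Finset.mem_filter.mpr ⟨he, heC.trans hCAB⟩, he₁, he₂⟩
  have hmem : ∀ {w}, w ∈ X₁ ∪ X₂ → w ∈ A ∨ w ∈ B := fun hw =>
    Finset.mem_union.mp (hcover ▸ hw)
  have meets : ∀ {C X : Finset α} {w : α}, w ∈ C → w ∈ X → (C ∩ X).Nonempty :=
    fun hC hX => ⟨_, Finset.mem_inter.mpr ⟨hC, hX⟩⟩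
  rcases Finset.mem_union.mp (hcover ▸ Finset.mem_union_left B hvA) with hv₁ | hv₂
  · obtain ⟨w, hw⟩ := h₂
    rcases hmem (Finset.mem_union_right X₁ hw) with hwA | hwB
    · exact crossing A Finset.subset_union_left hA hAc (meets hvA hv₁) (meets hwA hw)
    · exact crossing B Finset.subset_union_right hB hBc (meets hvB hv₁) (meets hwB hw)
  · obtain ⟨w, hw⟩ := h₁
    rcases hmem (Finset.mem_union_left X₂ hw) with hwA | hwB
    · exact crossing A Finset.subset_union_left hA hAc (meets hwA hw) (meets hvA hv₂)
    · exact crossing B Finset.subset_union_right hB hBc (meets hwB hw) (meets hvB hv₂)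

theorem exists_isComponent_superset {e : Finset α} (he : e ⊆ G.verts)
    (hec : (G.restrict e).Connected) : ∃ C, G.IsComponent C ∧ e ⊆ C := by
  let s := G.verts.powerset.filter fun D => e ⊆ D ∧ (G.restrict D).Connected
  have hes : e ∈ s := Finset.mem_filter.mpr ⟨Finset.mem_powerset.mpr he, subset_rfl, hec⟩
  obtain ⟨C, hC, hCmax⟩ := Finset.exists_max_image s Finset.card ⟨e, hes⟩
  obtain ⟨hCG, heC, hCc⟩ := by simpa [s] using hC
  refine ⟨C, ⟨hCG, hCc, fun D hCD hDG hDc => ?_⟩, heC⟩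
  have hDs : D ∈ s := by simp [s, hDG, heC.trans hCD, hDc]
  exact (Finset.eq_of_subset_of_card_le hCD (hCmax D hDs)).symm

theorem exists_isComponent_mem {v : α} (hv : v ∈ G.verts) : ∃ C, G.IsComponent C ∧ v ∈ C := by
  obtain ⟨C, hC, hvC⟩ := exists_isComponent_superset (Finset.singleton_subset_iff.mpr hv)
    (G.singleton_connected hv)
  exact ⟨C, hC, Finset.singleton_subset_iff.mp hvC⟩

theorem IsComponent.eq_of_mem {C C' : Finset α} (hC : G.IsComponent C) (hC' : G.IsComponent C')
    {v : α} (hv : v ∈ C) (hv' : v ∈ C') : C = C' := by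
  have hU : (G.restrict (C ∪ C')).Connected :=
    connected_union hC.1 hC'.1 hC.2.1 hC'.2.1 ⟨v, Finset.mem_inter.mpr ⟨hv, hv'⟩⟩
  have hsub : C ∪ C' ⊆ G.verts := Finset.union_subset hC.1 hC'.1
  exact (hC.2.2 _ Finset.subset_union_left hsub hU).symm.trans
    (hC'.2.2 _ Finset.subset_union_right hsub hU)

theorem IsComponent.subset_of_connected {C e : Finset α} (hC : G.IsComponent C) {v : α}
    (hvC : v ∈ C) (hve : v ∈ e) (he : e ⊆ G.verts) (hec : (G.restrict e).Connected) : e ⊆ C := by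
  obtain ⟨C', hC', heC'⟩ := exists_isComponent_superset he hec
  rw [hC.eq_of_mem hC' hvC (heC' hve)]
  exact heC'

end AtomicHypergraph

namespace FTree

variable {α : Type*}

theorem mem_labels_node {Y X : Finset α} {ts : List (FTree α)} :
    X ∈ (node Y ts).labels ↔ X = Y ∨ ∃ t ∈ ts, X ∈ t.labels := by
  induction ts with
  | nil => simp [labels]
  | cons t ts ih => simp [labels, ih, or_left_comm]

namespace IsSubtree

theorem of_mem_children {t U : FTree α} (h : t ∈ U.children) : IsSubtree t U :=
  child (refl t) h

theorem trans {R' R U : FTree α} (h₁ : IsSubtree R' R) (h₂ : IsSubtree R U) :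
    IsSubtree R' U := by
  induction h₂ with
  | refl => exact h₁
  | child _ h ih => exact child ih h

theorem eq_or_exists_child {R U : FTree α} (h : IsSubtree R U) :
    R = U ∨ ∃ t ∈ U.children, IsSubtree R t := by
  cases h with
  | refl => exact Or.inl rfl
  | child h₁ h₂ => exact Or.inr ⟨_, h₂, h₁⟩

theorem eq_or_exists_parent {R U : FTree α} (h : IsSubtree R U) :
    R = U ∨ ∃ P, IsSubtree P U ∧ R ∈ P.children := by
  induction h with
  | refl => exact Or.inl rfl
  | child _ h ih =>
    rcases ih with rfl | ⟨P, hP, hRP⟩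
    · exact Or.inr ⟨_, refl _, h⟩
    · exact Or.inr ⟨P, hP.trans (of_mem_children h), hRP⟩

theorem label_mem_labels {R U : FTree α} (h : IsSubtree R U) : R.label ∈ U.labels := by
  induction h with
  | refl => cases R; exact mem_labels_node.mpr (Or.inl rfl)
  | @child t u _ h ih => cases u; exact mem_labels_node.mpr (Or.inr ⟨t, h, ih⟩)

end IsSubtree

variable [DecidableEq α]

theorem mem_support_node {Y : Finset α} {ts : List (FTree α)} {a : α} :
    a ∈ (node Y ts).support ↔ a ∈ Y ∨ ∃ t ∈ ts, a ∈ t.support := by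
  induction ts with
  | nil => simp [support]
  | cons t ts ih => simp [support, ih, or_left_comm]

theorem mem_support {U : FTree α} {a : α} :
    a ∈ U.support ↔ a ∈ U.label ∨ ∃ t ∈ U.children, a ∈ t.support := by
  cases U
  exact mem_support_node

theorem mem_nests_node {Y N : Finset α} {ts : List (FTree α)} :
    N ∈ (node Y ts).nests ↔ N = (node Y ts).support ∨ ∃ t ∈ ts, N ∈ t.nests := by
  have : ∀ ts : List (FTree α), N ∈ nestsList ts ↔ ∃ t ∈ ts, N ∈ t.nests := by
    intro ts
    induction ts with
    | nil => simp [nestsList]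
    | cons t ts ih => simp [nestsList, ih]
  simp [nests, this]

@[simp] theorem mem_nestSet {U : FTree α} {N : Finset α} : N ∈ U.nestSet ↔ N ∈ U.nests := by
  simp [nestSet]

theorem label_subset_support (U : FTree α) : U.label ⊆ U.support := by
  cases U
  exact fun a ha => mem_support_node.mpr (Or.inl ha)

theorem support_subset_of_mem_children {U t : FTree α} (h : t ∈ U.children) :
    t.support ⊆ U.support := by
  cases U
  exact fun a ha => mem_support_node.mpr (Or.inr ⟨t, h, ha⟩)

theorem IsSubtree.support_subset {R U : FTree α} (h : IsSubtree R U) :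
    R.support ⊆ U.support := by
  induction h with
  | refl => exact subset_rfl
  | child _ h ih => exact ih.trans (support_subset_of_mem_children h)

theorem IsSubtree.support_mem_nests {R U : FTree α} (h : IsSubtree R U) :
    R.support ∈ U.nests := by
  induction h with
  | refl => cases R; exact mem_nests_node.mpr (Or.inl rfl)
  | @child t u _ h ih => cases u; exact mem_nests_node.mpr (Or.inr ⟨t, h, ih⟩)

theorem IsSubtree.support_mem_nestSet {R U : FTree α} (h : IsSubtree R U) :
    R.support ∈ U.nestSet :=
  mem_nestSet.mpr h.support_mem_nests

theorem IsSubtree.nests_subset {R U : FTree α} (h : IsSubtree R U) {N : Finset α}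
    (hN : N ∈ R.nests) : N ∈ U.nests := by
  induction h with
  | refl => exact hN
  | @child t u _ h ih => cases u; exact mem_nests_node.mpr (Or.inr ⟨t, h, ih⟩)

theorem exists_subtreeAt_of_subtreeAtList {ts : List (FTree α)} {X : Finset α} {R : FTree α}
    (h : subtreeAtList ts X = some R) : ∃ t ∈ ts, subtreeAt t X = some R := by
  induction ts with
  | nil => simp [subtreeAtList] at h
  | cons t ts ih =>
    rw [subtreeAtList] at h
    cases ht : subtreeAt t X with
    | none =>
      obtain ⟨u, hu, h'⟩ := ih (by simpa [ht] using h)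
      exact ⟨u, List.mem_cons_of_mem _ hu, h'⟩
    | some R' => exact ⟨t, List.mem_cons_self, by simpa [ht] using h⟩

theorem isSome_subtreeAtList {ts : List (FTree α)} {X : Finset α} {t : FTree α}
    (ht : t ∈ ts) (h : (subtreeAt t X).isSome) : (subtreeAtList ts X).isSome := by
  induction ts with
  | nil => simp at ht
  | cons u ts ih =>
    rw [subtreeAtList]
    cases hu : subtreeAt u X with
    | none =>
      rcases List.mem_cons.mp ht with rfl | ht
      · simp [hu] at h
      · simpa using ih ht
    | some R => simp

end FTree

section NestCell

variable {α : Type*} [DecidableEq α]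

def nestCell (𝒩 : Finset (Finset α)) (M : Finset α) : Finset α :=
  M.filter fun v => ∀ L ∈ 𝒩, L ⊂ M → v ∉ L

theorem mem_nestCell {𝒩 : Finset (Finset α)} {M : Finset α} {v : α} :
    v ∈ nestCell 𝒩 M ↔ v ∈ M ∧ ∀ L ∈ 𝒩, L ⊂ M → v ∉ L :=
  Finset.mem_filter

theorem nestCell_anti {𝒩 𝒩' : Finset (Finset α)} (h : 𝒩 ⊆ 𝒩') (M : Finset α) :
    nestCell 𝒩' M ⊆ nestCell 𝒩 M := fun _ hv =>
  mem_nestCell.mpr ⟨(mem_nestCell.mp hv).1, fun L hL => (mem_nestCell.mp hv).2 L (h hL)⟩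

theorem nestCell_erase_subset {𝒩 : Finset (Finset α)} {M N : Finset α} (hNM : N ⊂ M) :
    nestCell (𝒩.erase N) M ⊆ nestCell 𝒩 M ∪ nestCell 𝒩 N := by
  intro v hv
  obtain ⟨hvM, hvL⟩ := mem_nestCell.mp hv
  by_cases hvN : v ∈ N
  · refine Finset.mem_union_right _ (mem_nestCell.mpr ⟨hvN, fun L hL hLN => ?_⟩)
    exact hvL L (Finset.mem_erase.mpr ⟨hLN.ne, hL⟩) (hLN.trans hNM)
  · refine Finset.mem_union_left _ (mem_nestCell.mpr ⟨hvM, fun L hL hLM hvL' => ?_⟩)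
    by_cases hLN : L = N
    · exact hvN (hLN ▸ hvL')
    · exact hvL L (Finset.mem_erase.mpr ⟨hLN, hL⟩) hLM hvL'

end NestCell

namespace IsConstruct

variable {α : Type*} [LinearOrder α] {G : AtomicHypergraph α} {U : FTree α}

theorem label_nonempty (hU : IsConstruct G U) : U.label.Nonempty := by
  cases hU with | node _ _ hY => exact hY

theorem isComponent_of_mem_children (hU : IsConstruct G U) {t : FTree α} (ht : t ∈ U.children) :
    (G.restrict (G.verts \ U.label)).IsComponent t.support := by
  cases hU with | node _ _ _ _ hmem => exact hmem t ht

theorem of_mem_children (hU : IsConstruct G U) {t : FTree α} (ht : t ∈ U.children) :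
    IsConstruct (G.restrict t.support) t := by
  cases hU with | node _ _ _ _ _ _ _ hchild => exact hchild t ht

theorem support_subset_verts_sdiff (hU : IsConstruct G U) {t : FTree α}
    (ht : t ∈ U.children) : t.support ⊆ G.verts \ U.label :=
  (hU.isComponent_of_mem_children ht).1.trans Finset.inter_subset_left

theorem mem_map_support_children (hU : IsConstruct G U) {C : Finset α} :
    C ∈ U.children.map support ↔ (G.restrict (G.verts \ U.label)).IsComponent C := by
  cases hU with
  | node _ _ _ _ hmem hcover =>
    show C ∈ _ ↔ _
    simp only [List.mem_map]
    exact ⟨fun ⟨t, ht, htC⟩ => htC ▸ hmem t ht, hcover C⟩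

theorem pairwise_map_support_children (hU : IsConstruct G U) :
    (U.children.map support).Pairwise (·.max < ·.max) := by
  cases hU with | node _ _ _ _ _ _ hsorted => exact List.pairwise_map.mpr hsorted

theorem eq_of_mem_children (hU : IsConstruct G U) {t t' : FTree α} (ht : t ∈ U.children)
    (ht' : t' ∈ U.children) {v : α} (hv : v ∈ t.support) (hv' : v ∈ t'.support) : t = t' := by
  have hnodup : (U.children.map support).Nodup :=
    hU.pairwise_map_support_children.imp fun h => ne_of_apply_ne Finset.max h.ne
  exact List.inj_on_of_nodup_map hnodup ht ht' <|
    (hU.isComponent_of_mem_children ht).eq_of_mem (hU.isComponent_of_mem_children ht') hv hv'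

theorem support_eq_verts (hU : IsConstruct G U) : U.support = G.verts := by
  cases hU with
  | node Y ts _ hYG hmem hcover =>
    ext a
    rw [mem_support_node]
    refine ⟨?_, fun ha => ?_⟩
    · rintro (ha | ⟨t, ht, ha⟩)
      exacts [hYG ha, ((hmem t ht).1.trans Finset.inter_subset_right) ha]
    · by_cases haY : a ∈ Y
      · exact Or.inl haY
      obtain ⟨C, hC, haC⟩ := exists_isComponent_mem (G := G.restrict (G.verts \ Y)) (v := a)
        (by simp [restrict, ha, haY])
      obtain ⟨t, ht, rfl⟩ := hcover C hC
      exact Or.inr ⟨t, ht, haC⟩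

theorem of_isSubtree (hU : IsConstruct G U) {R : FTree α} (hR : IsSubtree R U) :
    IsConstruct (G.restrict R.support) R := by
  induction hU with
  | node Y ts hY hYG hmem hcover hsorted hchild ih =>
    rcases hR.eq_or_exists_child with rfl | ⟨t, ht, hRt⟩
    · rw [(IsConstruct.node Y ts hY hYG hmem hcover hsorted hchild).support_eq_verts,
        restrict_self]
      exact .node Y ts hY hYG hmem hcover hsorted hchild
    · simpa only [restrict_restrict hRt.support_subset] using ih t ht hRt

theorem support_subset_support_sdiff (hU : IsConstruct G U) {R t : FTree α} (hR : IsSubtree R U)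
    (ht : t ∈ R.children) : t.support ⊆ R.support \ R.label :=
  ((hU.of_isSubtree hR).support_subset_verts_sdiff ht).trans
    (Finset.sdiff_subset_sdiff Finset.inter_subset_left subset_rfl)

theorem isSubtree_of_mem_label (hU : IsConstruct G U) {R R' : FTree α} (hR : IsSubtree R U)
    (hR' : IsSubtree R' U) {v : α} (hvR : v ∈ R.support) (hvR' : v ∈ R'.label) :
    IsSubtree R' R := by
  induction hU with
  | node Y ts hY hYG hmem hcover hsorted hchild ih =>
    have hU := IsConstruct.node Y ts hY hYG hmem hcover hsorted hchild
    rcases hR.eq_or_exists_child with rfl | ⟨t, ht, hRt⟩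
    · exact hR'
    have hvt : v ∈ t.support := hRt.support_subset hvR
    rcases hR'.eq_or_exists_child with rfl | ⟨t', ht', hR't'⟩
    · exact absurd hvR' (Finset.mem_sdiff.mp (hU.support_subset_verts_sdiff ht hvt)).2
    have hvt' : v ∈ t'.support := hR't'.support_subset (label_subset_support R' hvR')
    obtain rfl := hU.eq_of_mem_children ht ht' hvt hvt'
    exact ih t ht hRt hR't'

theorem isSubtree_of_support_subset (hU : IsConstruct G U) {R R' : FTree α}
    (hR : IsSubtree R U) (hR' : IsSubtree R' U) (h : R'.support ⊆ R.support) :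
    IsSubtree R' R :=
  have ⟨_, hv⟩ := (hU.of_isSubtree hR').label_nonempty
  hU.isSubtree_of_mem_label hR hR' (h (label_subset_support R' hv)) hv

theorem subtree_eq_of_mem_label (hU : IsConstruct G U) {R R' : FTree α} (hR : IsSubtree R U)
    (hR' : IsSubtree R' U) {v : α} (hv : v ∈ R.label) (hv' : v ∈ R'.label) : R' = R := by
  rcases (hU.isSubtree_of_mem_label hR hR' (label_subset_support R hv) hv').eq_or_exists_child
    with h | ⟨t, ht, hR't⟩
  · exact h
  · have := hU.support_subset_support_sdiff hR ht
      (hR't.support_subset (label_subset_support R' hv'))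
    exact absurd hv (Finset.mem_sdiff.mp this).2

theorem exists_subtree_of_mem_nests (hU : IsConstruct G U) {N : Finset α} (hN : N ∈ U.nests) :
    ∃ R, IsSubtree R U ∧ R.support = N := by
  induction hU with
  | node _ _ _ _ _ _ _ _ ih =>
    rcases mem_nests_node.mp hN with rfl | ⟨t, ht, hNt⟩
    · exact ⟨_, .refl _, rfl⟩
    · obtain ⟨R, hR, rfl⟩ := ih t ht hNt
      exact ⟨R, hR.trans (.of_mem_children ht), rfl⟩

theorem exists_subtree_mem_label (hU : IsConstruct G U) {v : α} (hv : v ∈ U.support) :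
    ∃ R, IsSubtree R U ∧ v ∈ R.label := by
  induction hU with
  | node _ _ _ _ _ _ _ _ ih =>
    rcases mem_support_node.mp hv with hvY | ⟨t, ht, hvt⟩
    · exact ⟨_, .refl _, hvY⟩
    · obtain ⟨R, hR, hvR⟩ := ih t ht hvt
      exact ⟨R, hR.trans (.of_mem_children ht), hvR⟩

theorem exists_subtree_of_mem_labels (hU : IsConstruct G U) {X : Finset α} (hX : X ∈ U.labels) :
    ∃ R, IsSubtree R U ∧ R.label = X := by
  induction hU with
  | node _ _ _ _ _ _ _ _ ih =>
    rcases mem_labels_node.mp hX with rfl | ⟨t, ht, hXt⟩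
    · exact ⟨_, .refl _, rfl⟩
    · obtain ⟨R, hR, rfl⟩ := ih t ht hXt
      exact ⟨R, hR.trans (.of_mem_children ht), rfl⟩

theorem subtreeAt_eq_some (hU : IsConstruct G U) {X : Finset α} {R : FTree α}
    (h : U.subtreeAt X = some R) : IsSubtree R U ∧ R.label = X := by
  induction hU with
  | node _ _ _ _ _ _ _ _ ih =>
    rw [subtreeAt] at h
    split_ifs at h with hYX
    · cases h
      exact ⟨.refl _, hYX⟩
    · obtain ⟨t, ht, h⟩ := exists_subtreeAt_of_subtreeAtList h
      obtain ⟨hRt, rfl⟩ := ih t ht h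
      exact ⟨hRt.trans (.of_mem_children ht), rfl⟩

theorem isSome_subtreeAt (hU : IsConstruct G U) {X : Finset α} (hX : X ∈ U.labels) :
    (U.subtreeAt X).isSome := by
  induction hU with
  | node _ _ _ _ _ _ _ _ ih =>
    rw [subtreeAt]
    split_ifs with hYX
    · rfl
    · rcases mem_labels_node.mp hX with rfl | ⟨t, ht, hXt⟩
      exacts [absurd rfl hYX, isSome_subtreeAtList ht (ih t ht hXt)]

theorem suppAt_label (hU : IsConstruct G U) {R : FTree α} (hR : IsSubtree R U) :
    U.suppAt R.label = R.support := by
  obtain ⟨R', hR'⟩ := Option.isSome_iff_exists.mp (hU.isSome_subtreeAt hR.label_mem_labels)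
  obtain ⟨hR'U, hlabel⟩ := hU.subtreeAt_eq_some hR'
  obtain ⟨v, hv⟩ := (hU.of_isSubtree hR).label_nonempty
  rw [suppAt, hR', hU.subtree_eq_of_mem_label hR hR'U hv (hlabel ▸ hv)]
  rfl

theorem connected_support (hU : IsConstruct G U) (hG : G.Connected) {R : FTree α}
    (hR : IsSubtree R U) : (G.restrict R.support).Connected := by
  induction hU with
  | @node G Y ts hY hYG hmem hcover hsorted hchild ih =>
    rcases hR.eq_or_exists_child with rfl | ⟨t, ht, hRt⟩
    · rwa [(IsConstruct.node Y ts hY hYG hmem hcover hsorted hchild).support_eq_verts,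
        restrict_self]
    have htc : (G.restrict t.support).Connected := by
      simpa only [restrict_restrict ((hmem t ht).1.trans Finset.inter_subset_left)] using
        (hmem t ht).2.1
    simpa only [restrict_restrict hRt.support_subset] using ih t ht htc hRt

theorem exists_child_of_ssubset (hU : IsConstruct G U) {R : FTree α} (hR : IsSubtree R U)
    {L : Finset α} (hL : L ∈ U.nests) (hLR : L ⊂ R.support) :
    ∃ t ∈ R.children, L ⊆ t.support := by
  obtain ⟨R', hR', rfl⟩ := hU.exists_subtree_of_mem_nests hL
  rcases (hU.isSubtree_of_support_subset hR hR' hLR.subset).eq_or_exists_child with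
    rfl | ⟨t, ht, hR't⟩
  · exact absurd rfl hLR.ne
  · exact ⟨t, ht, hR't.support_subset⟩

theorem support_ssubset_of_mem_children (hU : IsConstruct G U) {R t : FTree α}
    (hR : IsSubtree R U) (ht : t ∈ R.children) : t.support ⊂ R.support := by
  have htR := hU.support_subset_support_sdiff hR ht
  obtain ⟨v, hv⟩ := (hU.of_isSubtree hR).label_nonempty
  exact ⟨htR.trans Finset.sdiff_subset,
    fun h => (Finset.mem_sdiff.mp (htR (h (label_subset_support R hv)))).2 hv⟩

theorem nestCell_support (hU : IsConstruct G U) {R : FTree α} (hR : IsSubtree R U) :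
    nestCell U.nestSet R.support = R.label := by
  ext v
  refine ⟨fun hv => ?_, fun hv => mem_nestCell.mpr ⟨label_subset_support R hv, ?_⟩⟩
  · obtain ⟨hvR, hvL⟩ := mem_nestCell.mp hv
    rcases mem_support.mp hvR with hvR | ⟨t, ht, hvt⟩
    · exact hvR
    · exact absurd hvt <| hvL _ (((IsSubtree.of_mem_children ht).trans hR).support_mem_nestSet)
        (hU.support_ssubset_of_mem_children hR ht)
  · intro L hL hLR hvL
    obtain ⟨t, ht, hLt⟩ := hU.exists_child_of_ssubset hR (mem_nestSet.mp hL) hLR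
    exact (Finset.mem_sdiff.mp (hU.support_subset_support_sdiff hR ht (hLt hvL))).2 hv

theorem nestCell_erase_support (hU : IsConstruct G U) {P t : FTree α} (hP : IsSubtree P U)
    (ht : t ∈ P.children) :
    nestCell (U.nestSet.erase t.support) P.support = P.label ∪ t.label := by
  have htU : IsSubtree t U := (IsSubtree.of_mem_children ht).trans hP
  have htP := hU.support_ssubset_of_mem_children hP ht
  refine subset_antisymm ?_ (Finset.union_subset ?_ fun v hv => ?_)
  · rw [← hU.nestCell_support hP, ← hU.nestCell_support htU]
    exact nestCell_erase_subset htP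
  · rw [← hU.nestCell_support hP]
    exact nestCell_anti (Finset.erase_subset _ _) _
  refine mem_nestCell.mpr ⟨htP.subset (label_subset_support t hv), fun L hL hLP hvL => ?_⟩
  obtain ⟨hLt, hLU⟩ := Finset.mem_erase.mp hL
  obtain ⟨c, hc, hLc⟩ := hU.exists_child_of_ssubset hP (mem_nestSet.mp hLU) hLP
  obtain rfl := (hU.of_isSubtree hP).eq_of_mem_children hc ht (hLc hvL) (label_subset_support t hv)
  have hv' : v ∈ nestCell U.nestSet c.support := (hU.nestCell_support htU).symm ▸ hv
  exact (mem_nestCell.mp hv').2 L hLU (Finset.ssubset_iff_subset_ne.mpr ⟨hLc, hLt⟩) hvL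

theorem nestSet_of_mem_children (hU : IsConstruct G U) {t : FTree α} (ht : t ∈ U.children) :
    t.nestSet = U.nestSet.filter (· ⊆ t.support) := by
  ext N
  simp only [Finset.mem_filter, mem_nestSet]
  constructor
  · intro hN
    obtain ⟨R, hR, rfl⟩ := (hU.of_mem_children ht).exists_subtree_of_mem_nests hN
    exact ⟨(IsSubtree.of_mem_children ht).nests_subset hN, hR.support_subset⟩
  · rintro ⟨hN, hNt⟩
    obtain ⟨R, hR, rfl⟩ := hU.exists_subtree_of_mem_nests hN
    exact (hU.isSubtree_of_support_subset (.of_mem_children ht) hR hNt).support_mem_nests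

theorem label_eq_nestCell (hU : IsConstruct G U) : U.label = nestCell U.nestSet G.verts := by
  rw [← hU.support_eq_verts, hU.nestCell_support (.refl U)]

theorem nodup_map_support_children (hU : IsConstruct G U) : (U.children.map support).Nodup :=
  hU.pairwise_map_support_children.imp fun h => ne_of_apply_ne Finset.max h.ne

theorem map_support_children_eq {U' : FTree α} (hU : IsConstruct G U) (hU' : IsConstruct G U')
    (h : U.label = U'.label) : U.children.map support = U'.children.map support := by
  refine List.Perm.eq_of_pairwise (fun _ _ _ _ hab hba => absurd (hab.trans hba) (lt_irrefl _))
    hU.pairwise_map_support_children hU'.pairwise_map_support_children ?_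
  refine (List.perm_ext_iff_of_nodup hU.nodup_map_support_children
    hU'.nodup_map_support_children).mpr fun C => ?_
  rw [hU.mem_map_support_children, hU'.mem_map_support_children, h]

theorem eq_of_nestSet_eq {U' : FTree α} (hU : IsConstruct G U) (hU' : IsConstruct G U')
    (h : U.nestSet = U'.nestSet) : U = U' := by
  induction hU generalizing U' with
  | @node G Y ts hY hYG hmem hcover hsorted hchild ih =>
    have hU := IsConstruct.node Y ts hY hYG hmem hcover hsorted hchild
    obtain ⟨Y', ts'⟩ := U'
    obtain rfl : Y = Y' := by
      have hY := hU.label_eq_nestCell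
      rw [h] at hY
      exact hY.trans hU'.label_eq_nestCell.symm
    congr 1
    refine List.eq_of_map_eq_of_injOn (hU.map_support_children_eq hU' rfl)
      fun t ht t' ht' htt' => ih t ht (htt' ▸ hU'.of_mem_children ht') ?_
    rw [hU.nestSet_of_mem_children ht, hU'.nestSet_of_mem_children ht', h, htt']

end IsConstruct

section Edge

variable {α : Type*} [LinearOrder α] {H : AtomicHypergraph α}

theorem IsConstruct.card_label_eq_one {V : FTree α} (hV : IsConstruct H V) (hdim : V.dim = 1)
    {X : Finset α} (hX : X ∈ V.labels) (hX2 : 2 ≤ X.card) {R : FTree α} (hR : IsSubtree R V)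
    (hRX : R.label ≠ X) : R.label.card = 1 := by
  have hsum := List.sum_map_erase (fun X : Finset α => X.card - 1) hX
  have hle := List.le_sum_of_mem (List.mem_map_of_mem (f := fun X : Finset α => X.card - 1)
    ((List.mem_erase_of_ne hRX).mpr hR.label_mem_labels))
  have hpos := (hV.of_isSubtree hR).label_nonempty.card_pos
  rw [← dim, hdim] at hsum
  omega

theorem IsConstruct.suppAt_mem_sat {V : FTree α} (hV : IsConstruct H V) (hH : H.Connected)
    {X : Finset α} (hX : X ∈ V.labels) : V.suppAt X ∈ H.sat ∧ X ⊆ V.suppAt X := by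
  obtain ⟨R, hR, rfl⟩ := hV.exists_subtree_of_mem_labels hX
  rw [hV.suppAt_label hR]
  exact ⟨mem_sat.mpr ⟨hV.support_eq_verts ▸ hR.support_subset, hV.connected_support hH hR⟩,
    label_subset_support R⟩

theorem FTree.ParentChild.suppAt_subset {W : FTree α} {X Y : Finset α} (hW : IsConstruct H W)
    (h : ParentChild X Y W) : W.suppAt Y ⊆ W.suppAt X := by
  obtain ⟨R, hR, rfl, t, ht, rfl⟩ := h
  rw [hW.suppAt_label hR, hW.suppAt_label ((IsSubtree.of_mem_children ht).trans hR)]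
  exact support_subset_of_mem_children ht

theorem IsConstruction.exists_subtree_label_eq {W : FTree α} (hW : IsConstruction H W) {v : α}
    (hv : v ∈ H.verts) : ∃ R, IsSubtree R W ∧ R.label = {v} :=
  have ⟨R, hR, hvR⟩ := hW.1.exists_subtree_mem_label (hW.1.support_eq_verts ▸ hv)
  ⟨R, hR, Finset.eq_singleton_of_card_eq_one (hW.2 _ hR.label_mem_labels) hvR⟩

theorem IsConstruction.suppAt_ne {W : FTree α} (hW : IsConstruction H W) {v w : α}
    (hv : v ∈ H.verts) (hw : w ∈ H.verts) (hvw : v ≠ w) : W.suppAt {v} ≠ W.suppAt {w} := by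
  obtain ⟨R, hR, hRv⟩ := hW.exists_subtree_label_eq hv
  obtain ⟨R', hR', hR'w⟩ := hW.exists_subtree_label_eq hw
  intro h
  have := congrArg (nestCell W.nestSet) h
  rw [← hRv, ← hR'w, hW.1.suppAt_label hR, hW.1.suppAt_label hR', hW.1.nestCell_support hR,
    hW.1.nestCell_support hR', hRv, hR'w] at this
  exact hvw (Finset.singleton_inj.mp this)

/-- `W` splits the node of `V` with support `K` into `{p}` above `{n}`: its only new nest is
`supp(W↾n)`, the component of `K ∖ {p}` containing `n`. -/
structure Resolves (H : AtomicHypergraph α) (V W : FTree α) (K : Finset α) (p n : α) : Prop where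
  nestSet_eq : W.nestSet = insert (W.suppAt {n}) V.nestSet
  suppAt_top : W.suppAt {p} = K
  mem_suppAt_bottom : n ∈ W.suppAt {n}
  isComponent : (H.restrict (K \ {p})).IsComponent (W.suppAt {n})

theorem IsConstruct.resolves_of_mem_children {V W P t : FTree α} (hW : IsConstruct H W)
    (hP : IsSubtree P W) (ht : t ∈ P.children) {p n : α} (hp : P.label = {p})
    (hn : t.label = {n}) (hV : V.nestSet = W.nestSet.erase t.support) :
    Resolves H V W P.support p n := by
  have htW : IsSubtree t W := (IsSubtree.of_mem_children ht).trans hP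
  have hPH : P.support ⊆ H.verts := hW.support_eq_verts ▸ hP.support_subset
  have hcomp := (hW.of_isSubtree hP).isComponent_of_mem_children ht
  rw [restrict_verts_of_subset hPH, restrict_restrict Finset.sdiff_subset, hp] at hcomp
  have hbot : W.suppAt {n} = t.support := hn ▸ hW.suppAt_label htW
  refine ⟨?_, hp ▸ hW.suppAt_label hP,
    hbot ▸ label_subset_support t (hn ▸ Finset.mem_singleton_self n), hbot ▸ hcomp⟩
  rw [hbot, hV, Finset.insert_erase htW.support_mem_nestSet]

theorem IsConstruction.resolves_of_coveredBy {V W : FTree α} {x y : α} (hW : IsConstruction H W)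
    (hV : IsConstruct H V) (hdim : V.dim = 1) (hxy : x ≠ y) (hnode : {x, y} ∈ V.labels)
    (hWV : CoveredBy W V) :
    Resolves H V W (V.suppAt {x, y}) x y ∨ Resolves H V W (V.suppAt {x, y}) y x := by
  obtain ⟨N, hN, hNW, hVW⟩ := hWV
  obtain ⟨t, htW, rfl⟩ := hW.1.exists_subtree_of_mem_nests hN
  obtain ⟨P, hP, ht⟩ := htW.eq_or_exists_parent.resolve_left fun h => hNW (h ▸ rfl)
  obtain ⟨p, hp⟩ := Finset.card_eq_one.mp (hW.2 _ hP.label_mem_labels)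
  obtain ⟨n, hn⟩ := Finset.card_eq_one.mp (hW.2 _ htW.label_mem_labels)
  have hpn : p ≠ n := by
    rintro rfl
    have := hW.1.support_subset_support_sdiff hP ht
      (label_subset_support t (hn ▸ Finset.mem_singleton_self p))
    exact (Finset.mem_sdiff.mp this).2 (hp ▸ Finset.mem_singleton_self p)
  have hPV : P.support ∈ V.nestSet := hVW ▸ Finset.mem_erase.mpr
    ⟨(hW.1.support_ssubset_of_mem_children hP ht).ne', hP.support_mem_nestSet⟩
  obtain ⟨Q, hQ, hQP⟩ := hV.exists_subtree_of_mem_nests (mem_nestSet.mp hPV)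
  -- contracting the edge between `P` and `t` merges their labels
  have hQpn : Q.label = {p, n} := by
    rw [← hV.nestCell_support hQ, hQP, hVW, hW.1.nestCell_erase_support hP ht, hp, hn]
    rfl
  have hQxy : Q.label = {x, y} := by
    by_contra hne
    have := hV.card_label_eq_one hdim hnode (Finset.card_pair hxy).ge hQ hne
    rw [hQpn, Finset.card_pair hpn] at this
    exact absurd this (by decide)
  rw [← hQxy, hV.suppAt_label hQ, hQP]
  have hres := hW.1.resolves_of_mem_children hP ht hp hn hVW
  rcases Finset.pair_eq_pair_iff.mp (hQpn.symm.trans hQxy) with ⟨rfl, rfl⟩ | ⟨rfl, rfl⟩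
  exacts [Or.inl hres, Or.inr hres]

theorem card_sat_filter_eq_add {K C : Finset α} {a b : α}
    (hC : (H.restrict (K \ {b})).IsComponent C) (ha : a ∈ C) :
    (H.sat.filter fun e => a ∈ e ∧ e ⊆ K).card =
      (H.sat.filter fun e => a ∈ e ∧ e ⊆ C).card +
        (H.sat.filter fun e => a ∈ e ∧ b ∈ e ∧ e ⊆ K).card := by
  have hCK : C ⊆ K \ {b} := hC.1.trans Finset.inter_subset_left
  have avoiding : ∀ e ∈ H.sat, (a ∈ e ∧ e ⊆ K) ∧ b ∉ e ↔ a ∈ e ∧ e ⊆ C := by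
    intro e he
    obtain ⟨heH, hec⟩ := mem_sat.mp he
    constructor
    · rintro ⟨⟨hae, heK⟩, hbe⟩
      have heKb : e ⊆ K \ {b} :=
        Finset.subset_sdiff.mpr ⟨heK, Finset.disjoint_singleton_right.mpr hbe⟩
      refine ⟨hae, hC.subset_of_connected ha hae (Finset.subset_inter heKb heH) ?_⟩
      rwa [restrict_restrict heKb]
    · rintro ⟨hae, heC⟩
      have heKb := heC.trans hCK
      exact ⟨⟨hae, heKb.trans Finset.sdiff_subset⟩, fun hbe => by simpa using heKb hbe⟩
  rw [← Finset.card_filter_add_card_filter_not (fun e => b ∈ e), Finset.filter_filter,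
    Finset.filter_filter, add_comm, Finset.filter_congr avoiding]
  exact congrArg _ (congrArg Finset.card (Finset.filter_congr fun e _ => by tauto))

namespace Resolves

variable {V W : FTree α} {K : Finset α} {p n : α}

theorem eq {T : FTree α} (hW : IsConstruct H W) (hT : IsConstruct H T) (h : Resolves H V W K p n)
    (h' : Resolves H V T K p n) : W = T :=
  hW.eq_of_nestSet_eq hT <| by
    rw [h.nestSet_eq, h'.nestSet_eq, h.isComponent.eq_of_mem h'.isComponent h.mem_suppAt_bottom
      h'.mem_suppAt_bottom]

theorem not_parentChild (h : Resolves H V W K p n) (hW : IsConstruct H W)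
    (hpar : ParentChild {n} {p} W) (hp : p ∈ K) : False := by
  have := h.isComponent.1 (hpar.suppAt_subset hW (h.suppAt_top ▸ hp))
  exact (Finset.mem_sdiff.mp (Finset.mem_inter.mp this).1).2 (Finset.mem_singleton_self p)

theorem coordVec_top (h : Resolves H V W K p n) :
    coordVec H W p = (H.sat.filter fun e => p ∈ e ∧ e ⊆ K).card := by
  rw [coordVec, h.suppAt_top]

theorem coordVec_bottom_add (h : Resolves H V W K p n) :
    coordVec H W n + (H.sat.filter fun e => n ∈ e ∧ p ∈ e ∧ e ⊆ K).card =
      (H.sat.filter fun e => n ∈ e ∧ e ⊆ K).card :=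
  (card_sat_filter_eq_add h.isComponent h.mem_suppAt_bottom).symm

theorem coordVec_eq (h : Resolves H V W K p n) (hW : IsConstruction H W) (hV : IsConstruct H V)
    (hdim : V.dim = 1) {X : Finset α} (hX : X ∈ V.labels) (hX2 : 2 ≤ X.card) {w : α}
    (hw : w ∈ H.verts) (hwn : w ≠ n) (hwX : w ∉ X) : coordVec H W w = coordVec H V w := by
  obtain ⟨R, hR, hRw⟩ := hW.exists_subtree_label_eq hw
  have hWw : W.suppAt {w} = R.support := hRw ▸ hW.1.suppAt_label hR
  have hRV : R.support ∈ V.nestSet := by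
    refine (Finset.mem_insert.mp (h.nestSet_eq ▸ hR.support_mem_nestSet)).resolve_left ?_
    exact hWw ▸ hW.suppAt_ne hw (Finset.mem_inter.mp (h.isComponent.1 h.mem_suppAt_bottom)).2 hwn
  obtain ⟨Q, hQ, hQR⟩ := hV.exists_subtree_of_mem_nests (mem_nestSet.mp hRV)
  have hwQ : w ∈ Q.label := by
    rw [← hV.nestCell_support hQ, hQR]
    refine nestCell_anti (h.nestSet_eq ▸ Finset.subset_insert _ _) _ ?_
    rw [hW.1.nestCell_support hR, hRw]
    exact Finset.mem_singleton_self w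
  have hQw : Q.label = {w} := Finset.eq_singleton_of_card_eq_one
    (hV.card_label_eq_one hdim hX hX2 hQ fun hQX => hwX (hQX ▸ hwQ)) hwQ
  rw [coordVec, coordVec, hWw, ← hQw, hV.suppAt_label hQ, hQR]

end Resolves

end Edge

/-- key computation in Proposition `p:flip-partial-order`.  If the
constructions `S, T` are the endpoints of an edge with non-singleton node `{x,y}`, with
`{x}` the parent of `{y}` in `S`, and `K = supp(S ↾ x)`, then the coordinate vectors
`v^S, v^T` agree away from `x, y`, and `v^S_x - v^T_x = λ = v^T_y - v^S_y ≥ 1`, where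
`λ = |{e ∈ Sat(𝓗) : {x,y} ⊆ e ⊆ K}|`. -/
theorem stmt7 {α : Type*} [LinearOrder α] (H : AtomicHypergraph α) (hH : H.Connected)
    (S T V : FTree α) (x y : α)
    (hS : IsConstruction H S) (hT : IsConstruction H T) (hST : S ≠ T)
    (hV : IsConstruct H V) (hdim : V.dim = 1) (hxy : x ≠ y)
    (hnode : ({x, y} : Finset α) ∈ V.labels)
    (hSV : FTree.CoveredBy S V) (hTV : FTree.CoveredBy T V)
    (hpar : FTree.ParentChild ({x} : Finset α) ({y} : Finset α) S) :
    (∀ w ∈ H.verts, w ≠ x → w ≠ y → coordVec H S w = coordVec H T w) ∧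
    ((coordVec H S x : ℤ) - (coordVec H T x : ℤ) =
      ((H.sat.filter fun e => x ∈ e ∧ y ∈ e ∧ e ⊆ S.suppAt {x}).card : ℤ)) ∧
    ((coordVec H T y : ℤ) - (coordVec H S y : ℤ) =
      ((H.sat.filter fun e => x ∈ e ∧ y ∈ e ∧ e ⊆ S.suppAt {x}).card : ℤ)) ∧
    1 ≤ (H.sat.filter fun e => x ∈ e ∧ y ∈ e ∧ e ⊆ S.suppAt {x}).card := by
  obtain ⟨hKsat, hxyK⟩ := hV.suppAt_mem_sat hH hnode
  have hxK : x ∈ V.suppAt {x, y} := hxyK (by simp)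
  have hyK : y ∈ V.suppAt {x, y} := hxyK (by simp)
  have hS' : Resolves H V S (V.suppAt {x, y}) x y :=
    (hS.resolves_of_coveredBy hV hdim hxy hnode hSV).resolve_right
      fun h => h.not_parentChild hS.1 hpar hyK
  have hT' : Resolves H V T (V.suppAt {x, y}) y x :=
    (hT.resolves_of_coveredBy hV hdim hxy hnode hTV).resolve_left
      fun h => hST (hS'.eq hS.1 hT.1 h)
  have hswap : (H.sat.filter fun e => y ∈ e ∧ x ∈ e ∧ e ⊆ V.suppAt {x, y}) =
      H.sat.filter fun e => x ∈ e ∧ y ∈ e ∧ e ⊆ V.suppAt {x, y} :=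
    Finset.filter_congr fun _ _ => and_left_comm
  have hcard2 := (Finset.card_pair hxy).ge
  rw [hS'.suppAt_top]
  refine ⟨fun w hw hwx hwy => ?_, ?_, ?_, ?_⟩
  · rw [hS'.coordVec_eq hS hV hdim hnode hcard2 hw hwy (by simp [hwx, hwy]),
      hT'.coordVec_eq hT hV hdim hnode hcard2 hw hwx (by simp [hwx, hwy])]
  · have := hT'.coordVec_bottom_add
    rw [hS'.coordVec_top]
    omega
  · have := hS'.coordVec_bottom_add
    rw [hswap] at this
    rw [hT'.coordVec_top]
    omega
  · exact Finset.card_pos.mpr ⟨_, Finset.mem_filter.mpr ⟨hKsat, hxK, hyK, subset_rfl⟩⟩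

end
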